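/- For p = 2, Igusa's local zeta function of f(x,y) = x(x+2y) over Z_2 satisfies Z_f(s) = (1/4)·(2 − 2^{1-s} + 2^{-2s}) / (1 − 2^{-1-s})^2. -/

import Mathlib

open MeasureTheory
instance : Fact (Nat.Prime 2) := ⟨Nat.prime_two⟩
noncomputable instance : MeasurableSpace ℤ_[2] := borel _
instance : BorelSpace ℤ_[2] := ⟨rfl⟩

/-!
The computation works for `x (x + p y)` over `ℤ_[p]` for any prime `p`. An invariant probability
measure on `ℤ_[p] × ℤ_[p]` is a product of Haar measures, so the zeta function is an iterated
integral. If `x` is a unit then so is `x + p y`, and the integrand is `1`. If `x = p c` then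
`x (x + p y) = x · p (c + y)`, and translation invariance in `y` turns the inner integral into
`‖x‖ ^ s p ^ (-s) I(s)` with `I(s) = ∫ ‖x‖ ^ s`. Since `p ^ n ℤ_[p]` has index `p ^ n`, the sphere
`‖x‖ = p ^ (-n)` has measure `p ^ (-n) (1 - p⁻¹)`, and summing over spheres gives
`I(s) = (1 - p⁻¹) / (1 - p ^ (-1 - s))`.
-/

open Metric

namespace MeasureTheory.Measure

variable {G H : Type*} [AddCommGroup G] [TopologicalSpace G] [IsTopologicalAddGroup G]
  [CompactSpace G] [MeasurableSpace G] [BorelSpace G]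

theorem exists_isProbabilityMeasure_isAddHaarMeasure :
    ∃ ν : Measure G, IsProbabilityMeasure ν ∧ ν.IsAddHaarMeasure :=
  ⟨addHaarMeasure ⊤,
    ⟨by simpa using addHaarMeasure_self (K₀ := (⊤ : TopologicalSpace.PositiveCompacts G))⟩,
    inferInstance⟩

theorem eq_prod_of_isAddLeftInvariant [AddCommGroup H] [TopologicalSpace H]
    [IsTopologicalAddGroup H] [CompactSpace H] [MeasurableSpace H] [BorelSpace H]
    [SecondCountableTopology G] [SecondCountableTopology H]
    (μ : Measure (G × H)) [IsProbabilityMeasure μ] [μ.IsAddLeftInvariant]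
    (ν₁ : Measure G) [IsProbabilityMeasure ν₁] [ν₁.IsAddHaarMeasure]
    (ν₂ : Measure H) [IsProbabilityMeasure ν₂] [ν₂.IsAddHaarMeasure] :
    μ = ν₁.prod ν₂ := by
  have h := isAddInvariant_eq_smul_of_compactSpace μ (ν₁.prod ν₂)
  have hc : μ.addHaarScalarFactor (ν₁.prod ν₂) = 1 := by
    have := congrArg (· Set.univ) h
    simp only [measure_univ, smul_apply, ENNReal.smul_def, smul_eq_mul, mul_one] at this
    exact_mod_cast this.symm
  rw [h, hc, one_smul]

end MeasureTheory.Measure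

namespace PadicInt

variable {p : ℕ} [Fact p.Prime]

theorem coe_ker_toZModPow (n : ℕ) :
    (RingHom.ker (toZModPow (p := p) n) : Set ℤ_[p]) =
      closedBall 0 ((p : ℝ) ^ (-n : ℤ)) := by
  ext x
  simp [ker_toZModPow, ← norm_le_pow_iff_mem_span_pow]

theorem index_ker_toZModPow (n : ℕ) :
    (RingHom.ker (toZModPow (p := p) n)).toAddSubgroup.index = p ^ n := by
  have := AddSubgroup.index_ker (toZModPow (p := p) n).toAddMonoidHom
  rw [AddMonoidHom.range_eq_top.2 (ZMod.ringHom_surjective _)] at this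
  simp only [RingHom.toAddMonoidHom_eq_coe, AddSubgroup.mem_top, Nat.card_eq_fintype_card,
    Fintype.card_subtype_true, ZMod.card] at this
  exact this

theorem sphere_zpow_eq_diff (n : ℤ) :
    sphere (0 : ℤ_[p]) ((p : ℝ) ^ n) =
      closedBall 0 ((p : ℝ) ^ n) \ closedBall 0 ((p : ℝ) ^ (n - 1)) := by
  ext x
  simp only [mem_sphere_zero_iff_norm, Set.mem_sdiff, mem_closedBall_zero_iff,
    ← norm_lt_pow_iff_norm_le_pow_sub_one]
  constructor
  · intro h; simp [h]
  · rintro ⟨h, h'⟩; exact le_antisymm h (not_lt.1 h')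

theorem iUnion_sphere_zpow : ⋃ n : ℕ, sphere (0 : ℤ_[p]) ((p : ℝ) ^ (-n : ℤ)) = {0}ᶜ := by
  ext x
  simp only [Set.mem_iUnion, mem_sphere_zero_iff_norm, Set.mem_compl_singleton_iff]
  constructor
  · rintro ⟨n, hn⟩ rfl
    simp only [norm_zero] at hn
    exact (zpow_pos (Nat.cast_pos.2 (Fact.out : p.Prime).pos) _).ne hn
  · exact fun hx => ⟨x.valuation, norm_eq_zpow_neg_valuation hx⟩

theorem compl_sphere_one : (sphere (0 : ℤ_[p]) 1)ᶜ = ball 0 1 := by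
  ext x
  simp [(norm_le_one x).lt_iff_ne]

theorem norm_add_p_mul_eq_one {x : ℤ_[p]} (hx : ‖x‖ = 1) (y : ℤ_[p]) : ‖x + p * y‖ = 1 := by
  have hpy : ‖(p : ℤ_[p]) * y‖ < 1 := (norm_lt_one_iff_dvd _).2 (dvd_mul_right _ _)
  rw [norm_add_eq_max_of_ne (by rw [hx]; exact hpy.ne'), hx, max_eq_left hpy.le]

variable [MeasurableSpace ℤ_[p]] [BorelSpace ℤ_[p]] (ν : Measure ℤ_[p])

theorem integral_eq_setIntegral_sphere_one_add_setIntegral_ball_one {f : ℤ_[p] → ℝ}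
    (hf : Integrable f ν) :
    ∫ x, f x ∂ν = ∫ x in sphere 0 1, f x ∂ν + ∫ x in ball 0 1, f x ∂ν := by
  rw [← compl_sphere_one, integral_add_compl isClosed_sphere.measurableSet hf]

variable [ν.IsAddLeftInvariant]

theorem integral_norm_mul_add_p_mul_rpow_of_norm_lt_one {x : ℤ_[p]} (hx : ‖x‖ < 1) (s : ℝ) :
    ∫ y, ‖x * (x + p * y)‖ ^ s ∂ν = ‖x‖ ^ s * ((p : ℝ) ^ (-s) * ∫ y, ‖y‖ ^ s ∂ν) := by
  obtain ⟨c, rfl⟩ := (norm_lt_one_iff_dvd x).1 hx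
  have hp : (0 : ℝ) < p := Nat.cast_pos.2 (Fact.out : p.Prime).pos
  have h y : ‖p * c * (p * c + p * y)‖ ^ s = ‖p * c‖ ^ s * ((p : ℝ) ^ (-s) * ‖c + y‖ ^ s) := by
    rw [← mul_add, norm_mul, norm_mul (p : ℤ_[p]) (c + y), norm_p, Real.mul_rpow (norm_nonneg _)
      (by positivity), Real.mul_rpow (by positivity) (norm_nonneg _), Real.inv_rpow hp.le,
      Real.rpow_neg hp.le]
  simp only [h, integral_const_mul]
  rw [integral_add_left_eq_self (fun y => ‖y‖ ^ s) c]

variable [IsProbabilityMeasure ν]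

theorem measureReal_closedBall (n : ℕ) :
    ν.real (closedBall 0 ((p : ℝ) ^ (-n : ℤ))) = (p : ℝ) ^ (-n : ℤ) := by
  set H := (RingHom.ker (toZModPow (p := p) n)).toAddSubgroup
  have : H.FiniteIndex :=
    ⟨by rw [index_ker_toZModPow]; exact pow_ne_zero _ (Fact.out : p.Prime).ne_zero⟩
  have hH : (H : Set ℤ_[p]) = closedBall 0 ((p : ℝ) ^ (-n : ℤ)) := coe_ker_toZModPow n
  have h := congrArg ENNReal.toReal
    (H.index_mul_measure (hH ▸ isClosed_closedBall.measurableSet) ν)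
  rw [index_ker_toZModPow, hH, measure_univ, ENNReal.toReal_mul] at h
  rw [measureReal_def, zpow_neg, zpow_natCast]
  exact eq_inv_of_mul_eq_one_right (by simpa using h)

theorem measure_zero_singleton : ν {0} = 0 := by
  have hle : ∀ n : ℕ, ν.real {0} ≤ ((p : ℝ)⁻¹) ^ n := fun n => by
    rw [inv_pow, ← zpow_natCast, ← zpow_neg, ← measureReal_closedBall ν n]
    exact measureReal_mono (by simp)
  have hp : (p : ℝ)⁻¹ < 1 := inv_lt_one_of_one_lt₀ (by exact_mod_cast (Fact.out : p.Prime).one_lt)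
  have := ge_of_tendsto' (tendsto_pow_atTop_nhds_zero_of_lt_one (by positivity) hp) hle
  exact (measureReal_eq_zero_iff).1 (le_antisymm this measureReal_nonneg)

theorem measureReal_sphere (n : ℕ) :
    ν.real (sphere 0 ((p : ℝ) ^ (-n : ℤ))) = (p : ℝ) ^ (-n : ℤ) * (1 - (p : ℝ)⁻¹) := by
  have hp : (1 : ℝ) < p := by exact_mod_cast (Fact.out : p.Prime).one_lt
  rw [sphere_zpow_eq_diff, measureReal_sdiff (closedBall_subset_closedBall
      (zpow_le_zpow_right₀ hp.le (by omega))) measurableSet_closedBall,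
    show -(n : ℤ) - 1 = -((n + 1 : ℕ) : ℤ) by push_cast; ring, measureReal_closedBall,
    measureReal_closedBall, mul_one_sub, ← zpow_neg_one, ← zpow_add₀ (by positivity)]
  push_cast
  ring_nf

theorem setIntegral_sphere_norm_rpow (s : ℝ) (n : ℕ) :
    ∫ x in sphere 0 ((p : ℝ) ^ (-n : ℤ)), ‖x‖ ^ s ∂ν =
      (1 - (p : ℝ)⁻¹) * ((p : ℝ) ^ (-1 - s)) ^ n := by
  have hp : (0 : ℝ) < p := Nat.cast_pos.2 (Fact.out : p.Prime).pos
  rw [setIntegral_congr_fun isClosed_sphere.measurableSet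
      (fun x hx => by rw [mem_sphere_zero_iff_norm.1 hx]), setIntegral_const,
    measureReal_sphere, smul_eq_mul, mul_comm _ (1 - _), mul_assoc, ← Real.rpow_intCast,
    ← Real.rpow_mul hp.le, ← Real.rpow_add hp, ← Real.rpow_natCast, ← Real.rpow_mul hp.le]
  push_cast
  ring_nf

theorem integral_norm_rpow {s : ℝ} (hs : 0 ≤ s) :
    ∫ x, ‖x‖ ^ s ∂ν = (1 - (p : ℝ)⁻¹) / (1 - (p : ℝ) ^ (-1 - s)) := by
  have hp : (1 : ℝ) < p := by exact_mod_cast (Fact.out : p.Prime).one_lt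
  have hint : Integrable (fun x : ℤ_[p] => ‖x‖ ^ s) ν :=
    (by fun_prop : Continuous _).integrable_of_hasCompactSupport (.of_compactSpace _)
  have hdisj : Pairwise (Function.onFun Disjoint
      fun n : ℕ => sphere (0 : ℤ_[p]) ((p : ℝ) ^ (-n : ℤ))) := by
    intro m n hmn
    refine Set.disjoint_left.2 fun x hm hn => hmn ?_
    rw [mem_sphere_zero_iff_norm] at hm hn
    exact_mod_cast neg_injective (zpow_right_injective₀ (by positivity) hp.ne' (hm.symm.trans hn))
  calc ∫ x, ‖x‖ ^ s ∂ν
      = ∫ x in ⋃ n : ℕ, sphere 0 ((p : ℝ) ^ (-n : ℤ)), ‖x‖ ^ s ∂ν := by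
        rw [iUnion_sphere_zpow, ← setIntegral_univ]
        exact setIntegral_congr_set (.symm <| (ae_eq_univ (μ := ν)).2
          (by rw [compl_compl]; exact measure_zero_singleton ν))
    _ = ∑' n : ℕ, (1 - (p : ℝ)⁻¹) * ((p : ℝ) ^ (-1 - s)) ^ n := by
        rw [integral_iUnion (fun _ => isClosed_sphere.measurableSet) hdisj hint.integrableOn]
        simp only [setIntegral_sphere_norm_rpow]
    _ = (1 - (p : ℝ)⁻¹) / (1 - (p : ℝ) ^ (-1 - s)) := by
        rw [tsum_mul_left, tsum_geometric_of_lt_one (by positivity)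
          (Real.rpow_lt_one_of_one_lt_of_neg hp (by linarith)), div_eq_mul_inv]

theorem integral_prod_norm_mul_add_p_mul_rpow {s : ℝ} (hs : 0 ≤ s) :
    ∫ z : ℤ_[p] × ℤ_[p], ‖z.1 * (z.1 + p * z.2)‖ ^ s ∂(ν.prod ν) =
      (1 - (p : ℝ)⁻¹) +
        (p : ℝ) ^ (-1 - 2 * s) * ((1 - (p : ℝ)⁻¹) / (1 - (p : ℝ) ^ (-1 - s))) ^ 2 := by
  have hp : (1 : ℝ) < p := by exact_mod_cast (Fact.out : p.Prime).one_lt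
  have hf : Integrable (fun z : ℤ_[p] × ℤ_[p] => ‖z.1 * (z.1 + p * z.2)‖ ^ s) (ν.prod ν) :=
    (by fun_prop : Continuous _).integrable_of_hasCompactSupport (.of_compactSpace _)
  have hnorm : Integrable (fun x : ℤ_[p] => ‖x‖ ^ s) ν :=
    (by fun_prop : Continuous _).integrable_of_hasCompactSupport (.of_compactSpace _)
  have hsphere : ∫ x in sphere 0 1, ‖x‖ ^ s ∂ν = 1 - (p : ℝ)⁻¹ := by
    simpa using setIntegral_sphere_norm_rpow ν s 0
  have hball : ∫ x in ball 0 1, ‖x‖ ^ s ∂ν =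
      (1 - (p : ℝ)⁻¹) / (1 - (p : ℝ) ^ (-1 - s)) - (1 - (p : ℝ)⁻¹) := by
    rw [← integral_norm_rpow ν hs,
      integral_eq_setIntegral_sphere_one_add_setIntegral_ball_one ν hnorm, hsphere,
      add_sub_cancel_left]
  rw [integral_prod _ hf,
    integral_eq_setIntegral_sphere_one_add_setIntegral_ball_one ν hf.integral_prod_left,
    setIntegral_congr_fun isClosed_sphere.measurableSet (g := fun x => ‖x‖ ^ s) fun x hx => by
      simp [norm_add_p_mul_eq_one (mem_sphere_zero_iff_norm.1 hx), mem_sphere_zero_iff_norm.1 hx],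
    setIntegral_congr_fun measurableSet_ball fun x hx =>
      integral_norm_mul_add_p_mul_rpow_of_norm_lt_one ν (mem_ball_zero_iff.1 hx) s,
    integral_mul_const, hsphere, hball, integral_norm_rpow ν hs,
    show (-1 - 2 * s) = (-1 - s) + (-s) by ring, Real.rpow_add (by positivity)]
  have hr : 1 - (p : ℝ) ^ (-1 - s) ≠ 0 :=
    (sub_pos.2 (Real.rpow_lt_one_of_one_lt_of_neg hp (by linarith))).ne'
  field_simp
  ring

end PadicInt

/-- Igusa's local zeta function of `f(x,y) = x(x+2y)` over `ℤ₂`: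
`Z_f(s) = (1/4)·(2 − 2^{1-s} + 2^{-2s}) / (1 − 2^{-1-s})²`. -/
theorem igusa_zeta_x_mul_x_add_two_y (μ : Measure (ℤ_[2] × ℤ_[2]))
    [IsProbabilityMeasure μ] [μ.IsAddLeftInvariant] (s : ℝ) (hs : 0 < s) :
    (∫ z : ℤ_[2] × ℤ_[2], ‖z.1 * (z.1 + 2 * z.2)‖ ^ s ∂μ) =
      (1 / 4) * (2 - (2 : ℝ) ^ (1 - s) + (2 : ℝ) ^ (-2 * s)) /
        (1 - (2 : ℝ) ^ (-1 - s)) ^ 2 := by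
  obtain ⟨ν, _, _⟩ := Measure.exists_isProbabilityMeasure_isAddHaarMeasure (G := ℤ_[2])
  have h := PadicInt.integral_prod_norm_mul_add_p_mul_rpow ν hs.le
  push_cast at h
  rw [Measure.eq_prod_of_isAddLeftInvariant μ ν ν, h]
  have h1 : (2 : ℝ) ^ (1 - s) = 2 * 2 ^ (-s) := by
    rw [sub_eq_add_neg, Real.rpow_add two_pos, Real.rpow_one]
  have h2 : (2 : ℝ) ^ (-1 - s) = 2 ^ (-s) / 2 := by
    rw [sub_eq_add_neg, Real.rpow_add two_pos, Real.rpow_neg_one]; ring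
  have h3 : (2 : ℝ) ^ (-2 * s) = (2 ^ (-s)) ^ 2 := by
    rw [← Real.rpow_natCast, ← Real.rpow_mul two_pos.le]; ring_nf
  have h4 : (2 : ℝ) ^ (-1 - 2 * s) = (2 ^ (-s)) ^ 2 / 2 := by
    rw [sub_eq_add_neg, Real.rpow_add two_pos, Real.rpow_neg_one, ← h3]; ring_nf
  have hne : (2 : ℝ) - 2 ^ (-s) ≠ 0 :=
    (sub_pos.2 ((Real.rpow_lt_one_of_one_lt_of_neg one_lt_two (by linarith)).trans
      one_lt_two)).ne'
  rw [h1, h2, h3, h4]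
  field_simp
  ring
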